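/- Let q be a prime power and let n, k be integers with 1 ≤ k ≤ n. The number of distinct symplectic self-orthogonal [2n,k]_q codes equals ∏_{i=1}^{k} (q^{2n−2i+2} − 1)/(q^i − 1), i.e., (q^{2n−2k+2} − 1)(q^{2n−2k+4} − 1) ⋯ (q^{2n} − 1) / ( (q^k − 1)(q^{k−1} − 1) ⋯ (q − 1) ). -/

import Mathlib

open scoped BigOperators
open Matrix

noncomputable section

/-- The symplectic inner product `⟨x,y⟩_s = ∑_{i=1}^n (x_i y_{n+i} - x_{n+i} y_i)` on `K^{2n}`. -/
def sympInner {K : Type*} [Field K] (n : ℕ) (x y : Fin (2 * n) → K) : K :=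
  ∑ i : Fin n,
    (x ⟨i.1, by have := i.2; omega⟩ * y ⟨n + i.1, by have := i.2; omega⟩ -
      x ⟨n + i.1, by have := i.2; omega⟩ * y ⟨i.1, by have := i.2; omega⟩)

/-- The symplectic dual `C^{⊥s}` of a code `C ⊆ K^{2n}`. -/
def sympDual {K : Type*} [Field K] (n : ℕ) (C : Submodule K (Fin (2 * n) → K)) :
    Submodule K (Fin (2 * n) → K) where
  carrier := {y | ∀ x ∈ C, sympInner n x y = 0}
  zero_mem' := by
    intro x hx
    simp [sympInner]
  add_mem' := by
    intro y z hy hz x hx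
    have h1 := hy x hx
    have h2 := hz x hx
    simp only [sympInner, Pi.add_apply] at h1 h2 ⊢
    calc (∑ i : Fin n, _) = (∑ i : Fin n,
          (x ⟨i.1, by have := i.2; omega⟩ * y ⟨n + i.1, by have := i.2; omega⟩ -
            x ⟨n + i.1, by have := i.2; omega⟩ * y ⟨i.1, by have := i.2; omega⟩)) +
        ∑ i : Fin n,
          (x ⟨i.1, by have := i.2; omega⟩ * z ⟨n + i.1, by have := i.2; omega⟩ -
            x ⟨n + i.1, by have := i.2; omega⟩ * z ⟨i.1, by have := i.2; omega⟩) := by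
          rw [← Finset.sum_add_distrib]
          exact Finset.sum_congr rfl fun i _ => by ring
      _ = 0 := by rw [h1, h2, add_zero]
  smul_mem' := by
    intro c y hy x hx
    have h := hy x hx
    simp only [sympInner, Pi.smul_apply, smul_eq_mul] at h ⊢
    calc (∑ i : Fin n, _) = c * ∑ i : Fin n,
          (x ⟨i.1, by have := i.2; omega⟩ * y ⟨n + i.1, by have := i.2; omega⟩ -
            x ⟨n + i.1, by have := i.2; omega⟩ * y ⟨i.1, by have := i.2; omega⟩) := by
          rw [Finset.mul_sum]
          exact Finset.sum_congr rfl fun i _ => by ring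
      _ = 0 := by rw [h, mul_zero]

/-- The matrix `Ω_n = [[O, I_n], [-I_n, O]]` defining the symplectic inner product. -/
def sympOmega (n : ℕ) (K : Type*) [Field K] : Matrix (Fin (2 * n)) (Fin (2 * n)) K :=
  Matrix.of fun i j => if j.1 = i.1 + n then 1 else if i.1 = j.1 + n then -1 else 0

/-- The block diagonal matrix `diag(J₂, …, J₂)` (with `J₂ = [[0,1],[-1,0]]`) of size `N`. -/
def jayBlocks (N : ℕ) (K : Type*) [Field K] : Matrix (Fin N) (Fin N) K :=
  Matrix.of fun i j =>
    if i.1 % 2 = 0 ∧ j.1 = i.1 + 1 then 1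
    else if j.1 % 2 = 0 ∧ i.1 = j.1 + 1 then -1 else 0

/-!
Count pairs (totally isotropic `k`-space, ordered basis of it) in two ways. An ordered
linearly independent family of pairwise orthogonal vectors is built one vector at a time: once
the first `i` vectors span `W` (of dimension `i`, totally isotropic), the next one ranges over
`W^⊥ \ W`, which has `q^(2n-i) - q^i` elements because the form is alternating and
nondegenerate. Every totally isotropic `k`-space has `∏_{i<k} (q^k - q^i)` ordered bases, and
cancelling `q^i` from the `i`-th factors of both products gives the stated formula.
-/

theorem Nat.card_sigma_of_card_eq {α : Type*} {β : α → Type*} [Finite α]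
    [∀ a, Finite (β a)] {c : ℕ} (h : ∀ a, Nat.card (β a) = c) :
    Nat.card (Sigma β) = Nat.card α * c := by
  have := Fintype.ofFinite α
  rw [Nat.card_sigma, Finset.sum_congr rfl fun a _ => h a, Finset.sum_const, Finset.card_univ,
    smul_eq_mul, Nat.card_eq_fintype_card]

section IsotropicFrames

open Module Submodule LinearMap.BilinForm

variable {K V : Type*} [Field K] [AddCommGroup V] [Module K V] (B : LinearMap.BilinForm K V)

theorem mem_orthogonal_span_iff {S : Set V} {v : V} :
    v ∈ B.orthogonal (span K S) ↔ ∀ x ∈ S, B x v = 0 := by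
  refine ⟨fun hv x hx => hv x (subset_span hx), fun hv x hx => ?_⟩
  have : span K S ≤ LinearMap.ker (B.flip v) := span_le.mpr hv
  exact this hx

theorem span_le_orthogonal_span {S : Set V} (hS : ∀ x ∈ S, ∀ y ∈ S, B x y = 0) :
    span K S ≤ B.orthogonal (span K S) :=
  span_le.mpr fun y hy => (mem_orthogonal_span_iff B).mpr fun x hx => hS x hx y hy

def isotropicFrames (k : ℕ) : Set (Fin k → V) :=
  {s | LinearIndependent K s ∧ ∀ i j, B (s i) (s j) = 0}

def totallyIsotropicSubspaces (k : ℕ) : Set (Submodule K V) :=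
  {W | finrank K W = k ∧ W ≤ B.orthogonal W}

variable {B}

theorem span_le_orthogonal_of_mem_isotropicFrames {k : ℕ} {s : Fin k → V}
    (hs : s ∈ isotropicFrames B k) :
    span K (Set.range s) ≤ B.orthogonal (span K (Set.range s)) :=
  span_le_orthogonal_span B <| by
    rintro _ ⟨i, rfl⟩ _ ⟨j, rfl⟩
    exact hs.2 i j

theorem cons_mem_isotropicFrames_iff (hB : B.IsAlt) {k : ℕ} {v : V} {s : Fin k → V} :
    Fin.cons v s ∈ isotropicFrames B (k + 1) ↔
      s ∈ isotropicFrames B k ∧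
        v ∈ (B.orthogonal (span K (Set.range s)) : Set V) \ span K (Set.range s) := by
  simp only [isotropicFrames, Set.mem_ofPred_eq, Set.mem_sdiff, SetLike.mem_coe,
    linearIndependent_finCons, mem_orthogonal_span_iff, Set.forall_mem_range,
    Fin.forall_fin_succ, Fin.cons_zero, Fin.cons_succ, hB.self_eq_zero, hB.eq_iff (x := v),
    true_and, forall_and]
  tauto

def isotropicFramesSuccEquiv (hB : B.IsAlt) (k : ℕ) :
    isotropicFrames B (k + 1) ≃
      Σ s : isotropicFrames B k, ↥((B.orthogonal (span K (Set.range s.1)) : Set V) \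
        span K (Set.range s.1)) where
  toFun s :=
    have hs := (cons_mem_isotropicFrames_iff hB).mp (by rw [Fin.cons_self_tail]; exact s.2)
    ⟨⟨Fin.tail s.1, hs.1⟩, ⟨s.1 0, hs.2⟩⟩
  invFun p := ⟨Fin.cons p.2.1 p.1.1, (cons_mem_isotropicFrames_iff hB).mpr ⟨p.1.2, p.2.2⟩⟩
  left_inv _ := by simp only [Fin.cons_self_tail, Subtype.coe_eta]
  right_inv _ := rfl

def spanIsotropicFrame {k : ℕ} (s : isotropicFrames B k) : totallyIsotropicSubspaces B k :=
  ⟨span K (Set.range s.1), by rw [finrank_span_eq_card s.2.1, Fintype.card_fin],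
    span_le_orthogonal_of_mem_isotropicFrames s.2⟩

def spanIsotropicFrameFiberEquiv [FiniteDimensional K V] {k : ℕ}
    (W : totallyIsotropicSubspaces B k) :
    {s // spanIsotropicFrame s = W} ≃ {t : Fin k → W.1 // LinearIndependent K t} where
  toFun s := ⟨fun i => ⟨s.1.1 i, by
      rw [← congrArg Subtype.val s.2]; exact subset_span (Set.mem_range_self i)⟩,
    LinearIndependent.of_comp W.1.subtype s.1.2.1⟩
  invFun t :=
    have hW : finrank K W.1 = k ∧ W.1 ≤ B.orthogonal W.1 := W.2
    have ht : LinearIndependent K (W.1.subtype ∘ t.1) := t.2.map' _ W.1.ker_subtype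
    ⟨⟨W.1.subtype ∘ t.1, ht, fun i j => hW.2 (t.1 j).2 _ (t.1 i).2⟩,
      Subtype.ext <| show span K _ = W.1 from eq_of_le_of_finrank_eq
        (span_le.mpr <| Set.range_subset_iff.mpr fun i => (t.1 i).2)
        (by rw [finrank_span_eq_card ht, Fintype.card_fin, hW.1])⟩
  left_inv _ := rfl
  right_inv _ := rfl

variable [Fintype K] [Finite V]

local notation "q" => Fintype.card K

theorem card_orthogonal_diff (hB : B.Nondegenerate) {W : Submodule K V}
    (hW : W ≤ B.orthogonal W) :
    Nat.card ↥((B.orthogonal W : Set V) \ W) =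
      q ^ (finrank K V - finrank K W) - q ^ finrank K W := by
  rw [Nat.card_coe_set_eq, Set.ncard_sdiff hW, ← Nat.card_coe_set_eq, ← Nat.card_coe_set_eq,
    SetLike.coe_sort_coe, SetLike.coe_sort_coe,
    natCard_eq_pow_finrank (K := K) (V := B.orthogonal W),
    natCard_eq_pow_finrank (K := K) (V := W), Nat.card_eq_fintype_card, finrank_orthogonal hB]

theorem card_isotropicFrames (hB : B.IsAlt) (hB' : B.Nondegenerate) (k : ℕ) :
    Nat.card (isotropicFrames B k) = ∏ i ∈ Finset.range k, (q ^ (finrank K V - i) - q ^ i) := by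
  induction k with
  | zero =>
    have : Unique (isotropicFrames B 0) :=
      ⟨⟨⟨Fin.elim0, linearIndependent_empty_type, fun i => i.elim0⟩⟩,
        fun _ => Subtype.ext (funext fun i => i.elim0)⟩
    rw [Nat.card_unique, Finset.prod_range_zero]
  | succ k ih =>
    have hfiber (s : isotropicFrames B k) :
        Nat.card ↥((B.orthogonal (span K (Set.range s.1)) : Set V) \ span K (Set.range s.1)) =
          q ^ (finrank K V - k) - q ^ k := by
      rw [card_orthogonal_diff hB' (span_le_orthogonal_of_mem_isotropicFrames s.2),
        finrank_span_eq_card s.2.1, Fintype.card_fin]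
    rw [Nat.card_congr (isotropicFramesSuccEquiv hB k), Nat.card_sigma_of_card_eq hfiber, ih,
      Finset.prod_range_succ]

theorem card_isotropicFrames_eq_card_mul (k : ℕ) :
    Nat.card (isotropicFrames B k) =
      Nat.card (totallyIsotropicSubspaces B k) * ∏ i : Fin k, (q ^ k - q ^ i.1) := by
  have hfiber (W : totallyIsotropicSubspaces B k) :
      Nat.card {s // spanIsotropicFrame s = W} = ∏ i : Fin k, (q ^ k - q ^ i.1) := by
    rw [Nat.card_congr (spanIsotropicFrameFiberEquiv W), card_linearIndependent W.2.1.ge, W.2.1]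
  rw [← Nat.card_congr (Equiv.sigmaFiberEquiv spanIsotropicFrame),
    Nat.card_sigma_of_card_eq hfiber]

end IsotropicFrames

section Symplectic

variable {K : Type*} [Field K] {n : ℕ}

theorem sympInner_single_right_add (x : Fin (2 * n) → K) {j : ℕ} (hj : j < n) :
    sympInner n x (Pi.single ⟨n + j, by omega⟩ 1) = x ⟨j, by omega⟩ := by
  rw [sympInner, Finset.sum_eq_single ⟨j, hj⟩]
  · simp [Fin.ext_iff, show n ≠ 0 by omega]
  · intro i _ hi
    simp only [Pi.single_apply, Fin.ext_iff] at hi ⊢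
    grind
  · simp

theorem sympInner_single_right_of_lt (x : Fin (2 * n) → K) {j : ℕ} (hj : j < n) :
    sympInner n x (Pi.single ⟨j, by omega⟩ 1) = -x ⟨n + j, by omega⟩ := by
  rw [sympInner, Finset.sum_eq_single ⟨j, hj⟩]
  · simp [Fin.ext_iff, show n ≠ 0 by omega]
  · intro i _ hi
    simp only [Pi.single_apply, Fin.ext_iff] at hi ⊢
    grind
  · simp

variable (K n) in
def sympForm : LinearMap.BilinForm K (Fin (2 * n) → K) :=
  LinearMap.mk₂ K (sympInner n)
    (fun x x' y => by
      simp only [sympInner, Pi.add_apply, ← Finset.sum_add_distrib]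
      exact Finset.sum_congr rfl fun i _ => by ring)
    (fun c x y => by
      simp only [sympInner, Pi.smul_apply, smul_eq_mul, Finset.mul_sum]
      exact Finset.sum_congr rfl fun i _ => by ring)
    (fun x y y' => by
      simp only [sympInner, Pi.add_apply, ← Finset.sum_add_distrib]
      exact Finset.sum_congr rfl fun i _ => by ring)
    (fun c x y => by
      simp only [sympInner, Pi.smul_apply, smul_eq_mul, Finset.mul_sum]
      exact Finset.sum_congr rfl fun i _ => by ring)

@[simp]
theorem sympForm_apply (x y : Fin (2 * n) → K) : sympForm K n x y = sympInner n x y := rfl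

theorem sympDual_eq_orthogonal (C : Submodule K (Fin (2 * n) → K)) :
    sympDual n C = (sympForm K n).orthogonal C := rfl

theorem sympForm_isAlt : (sympForm K n).IsAlt := fun x =>
  show sympInner n x x = 0 from Finset.sum_eq_zero fun _ _ => by ring

theorem sympForm_nondegenerate : (sympForm K n).Nondegenerate := by
  have hrefl : (sympForm K n).IsRefl := sympForm_isAlt.isRefl
  refine (LinearMap.IsRefl.nondegenerate_iff_separatingLeft hrefl).mpr fun x hx => ?_
  funext j
  obtain hj | hj := lt_or_ge j.1 n
  · have := hx (Pi.single ⟨n + j, by omega⟩ 1)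
    rwa [sympForm_apply, sympInner_single_right_add x hj] at this
  · have hjn : j.1 - n < n := by omega
    have hj' : (⟨n + (j.1 - n), by omega⟩ : Fin (2 * n)) = j := Fin.ext (by simp; omega)
    have := hx (Pi.single ⟨j - n, by omega⟩ 1)
    rwa [sympForm_apply, sympInner_single_right_of_lt x hjn, hj', neg_eq_zero] at this

end Symplectic

section Counting

open Finset

theorem prod_Icc_one_eq_prod_range {M : Type*} [CommMonoid M] (f : ℕ → M) (k : ℕ) :
    ∏ i ∈ Icc 1 k, f i = ∏ i ∈ range k, f (i + 1) := by
  rw [← Ico_succ_right_eq_Icc, prod_Ico_eq_prod_range]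
  simp [add_comm]

theorem prod_Icc_div_eq_div_prod_range {F : Type*} [Field F] {q : F} (hq : q ≠ 0) {n k : ℕ}
    (hkn : k ≤ n) :
    ∏ i ∈ Icc 1 k, (q ^ (2 * n - 2 * i + 2) - 1) / (q ^ i - 1) =
      (∏ i ∈ range k, (q ^ (2 * n - i) - q ^ i)) / ∏ i ∈ range k, (q ^ k - q ^ i) := by
  have hnum : ∏ i ∈ range k, (q ^ (2 * n - i) - q ^ i) =
      (∏ i ∈ range k, q ^ i) * ∏ i ∈ Icc 1 k, (q ^ (2 * n - 2 * i + 2) - 1) := by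
    rw [prod_Icc_one_eq_prod_range, ← prod_mul_distrib]
    refine prod_congr rfl fun i hi => ?_
    have : i < k := mem_range.mp hi
    rw [show 2 * n - i = i + (2 * n - 2 * (i + 1) + 2) by omega, pow_add]
    ring
  have hden : ∏ i ∈ range k, (q ^ k - q ^ i) =
      (∏ i ∈ range k, q ^ i) * ∏ i ∈ Icc 1 k, (q ^ i - 1) := by
    rw [prod_Icc_one_eq_prod_range, ← prod_range_reflect (fun i => q ^ (i + 1) - 1),
      ← prod_mul_distrib]
    refine prod_congr rfl fun i hi => ?_
    have : i < k := mem_range.mp hi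
    rw [mul_sub, mul_one, ← pow_add, show i + (k - 1 - i + 1) = k by omega]
  rw [hnum, hden, mul_div_mul_left _ _ (prod_ne_zero_iff.mpr fun i _ => pow_ne_zero i hq),
    prod_div_distrib]

theorem Nat.cast_prod_range_pow_sub_pow {R : Type*} [CommRing R] {q : ℕ} (hq : 1 ≤ q)
    {f g : ℕ → ℕ} {k : ℕ} (hfg : ∀ i < k, g i ≤ f i) :
    ((∏ i ∈ range k, (q ^ f i - q ^ g i) : ℕ) : R) =
      ∏ i ∈ range k, ((q : R) ^ f i - q ^ g i) := by
  rw [Nat.cast_prod]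
  refine prod_congr rfl fun i hi => ?_
  rw [Nat.cast_sub (Nat.pow_le_pow_right hq (hfg i (mem_range.mp hi))), Nat.cast_pow,
    Nat.cast_pow]

end Counting

theorem card_symplectic_selfOrthogonal_general
    (q : ℕ)
    {K : Type*} [Field K] [Fintype K] (hK : Fintype.card K = q)
    (n k : ℕ) (hkn : k ≤ n) :
    (Nat.card {C : Submodule K (Fin (2 * n) → K) //
        Module.finrank K C = k ∧ C ≤ sympDual n C} : ℚ) =
      ∏ i ∈ Finset.Icc 1 k, ((q : ℚ) ^ (2 * n - 2 * i + 2) - 1) / ((q : ℚ) ^ i - 1) := by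
  have hq : 1 < q := hK ▸ Fintype.one_lt_card
  have hcount : Nat.card (totallyIsotropicSubspaces (sympForm K n) k) *
      ∏ i ∈ Finset.range k, (q ^ k - q ^ i) =
        ∏ i ∈ Finset.range k, (q ^ (2 * n - i) - q ^ i) := by
    rw [← Fin.prod_univ_eq_prod_range (fun i => q ^ k - q ^ i), ← hK,
      ← card_isotropicFrames_eq_card_mul, card_isotropicFrames sympForm_isAlt
        sympForm_nondegenerate, Module.finrank_fin_fun]
  have hden : ∏ i ∈ Finset.range k, ((q : ℚ) ^ k - q ^ i) ≠ 0 :=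
    Finset.prod_ne_zero_iff.mpr fun i hi =>
      sub_ne_zero.mpr (pow_lt_pow_right₀ (by exact_mod_cast hq) (Finset.mem_range.mp hi)).ne'
  rw [prod_Icc_div_eq_div_prod_range (by positivity) hkn, eq_div_iff hden,
    ← Nat.cast_prod_range_pow_sub_pow hq.le fun i hi => hi.le,
    ← Nat.cast_prod_range_pow_sub_pow hq.le fun i hi => by omega, ← Nat.cast_mul]
  simp_rw [sympDual_eq_orthogonal]
  exact congrArg _ hcount

/-- The number of symplectic self-orthogonal `[2n,k]_q` codes equals
`∏_{i=1}^{k} (q^{2n-2i+2} - 1)/(q^i - 1)`. -/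
theorem card_symplectic_selfOrthogonal
    (q : ℕ) (hq : IsPrimePow q)
    {K : Type*} [Field K] [Fintype K] (hK : Fintype.card K = q)
    (n k : ℕ) (hk : 1 ≤ k) (hkn : k ≤ n) :
    (Nat.card {C : Submodule K (Fin (2 * n) → K) //
        Module.finrank K C = k ∧ C ≤ sympDual n C} : ℚ) =
      ∏ i ∈ Finset.Icc 1 k, ((q : ℚ) ^ (2 * n - 2 * i + 2) - 1) / ((q : ℚ) ^ i - 1) :=
  card_symplectic_selfOrthogonal_general q hK n k hkn
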